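/- arXiv:2003.05169 — 2 statements merged into one kernel-verified Lean document; each statement's English description precedes it below -/
import Mathlib

section
/- Let Ĝ* minimise G ↦ H(Σ, Σ̂_G) and Ĝ_CV minimise G ↦ H(S_val, Σ̂_G) over a finite family M of graphs. Then the regret satisfies 0 ≤ H(Σ, Σ̂_{Ĝ_CV}) − H(Σ, Σ̂_{Ĝ*}) ≤ (1/2)⟨Σ − S_val, K̂_{Ĝ_CV} − K̂_{Ĝ*}⟩. -/
open MeasureTheory Matrix Real ProbabilityTheory

noncomputable def gaussDensity {p : ℕ} (S : Matrix (Fin p) (Fin p) ℝ) (x : Fin p → ℝ) : ℝ :=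
  (2 * Real.pi) ^ (-(p : ℝ) / 2) * Real.sqrt (S⁻¹).det * Real.exp (-(x ⬝ᵥ (S⁻¹ *ᵥ x)) / 2)

noncomputable def gaussMeasure {p : ℕ} (S : Matrix (Fin p) (Fin p) ℝ) : Measure (Fin p → ℝ) :=
  MeasureTheory.volume.withDensity fun x => ENNReal.ofReal (gaussDensity S x)

noncomputable def CE {p : ℕ} (A B : Matrix (Fin p) (Fin p) ℝ) : ℝ :=
  (1/2) * ((A * B⁻¹).trace - Real.log (B⁻¹).det)

def minner {p : ℕ} (A B : Matrix (Fin p) (Fin p) ℝ) : ℝ := (Bᵀ * A).trace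

noncomputable def frob {p : ℕ} (A : Matrix (Fin p) (Fin p) ℝ) : ℝ :=
  Real.sqrt (∑ i, ∑ j, (A i j)^2)

noncomputable def specNorm {p : ℕ} (A : Matrix (Fin p) (Fin p) ℝ) : ℝ :=
  ‖LinearMap.toContinuousLinearMap (Matrix.toEuclideanLin A)‖

/- The cross entropy is affine in its first argument, so
H(Σ, Σ̂_G) - H(S_val, Σ̂_G) = ½⟨Σ - S_val, K̂_G⟩ for every G (K̂_G is symmetric). Writing
the regret as [H(S_val, Σ̂_{Ĝ_CV}) - H(S_val, Σ̂_{Ĝ*})] + ½⟨Σ - S_val, K̂_{Ĝ_CV} - K̂_{Ĝ*}⟩,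
the bracket is nonpositive because Ĝ_CV minimises the validated cross entropy; the regret
is nonnegative because Ĝ* minimises the true one. -/

section CrossEntropy

variable {p : ℕ}

theorem minner_sub_right (A B C : Matrix (Fin p) (Fin p) ℝ) :
    minner A (B - C) = minner A B - minner A C := by
  rw [minner, minner, minner, transpose_sub, sub_mul, trace_sub]

theorem minner_eq_trace_mul_of_isSymm (A : Matrix (Fin p) (Fin p) ℝ)
    {B : Matrix (Fin p) (Fin p) ℝ} (hB : B.IsSymm) : minner A B = (A * B).trace := by
  rw [minner, hB.eq, trace_mul_comm]

theorem CE_eq_CE_add_minner (A A' : Matrix (Fin p) (Fin p) ℝ)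
    {B : Matrix (Fin p) (Fin p) ℝ} (hB : B.IsSymm) :
    CE A B = CE A' B + (1/2) * minner (A - A') B⁻¹ := by
  rw [minner_eq_trace_mul_of_isSymm _ hB.inv, CE, CE, sub_mul, trace_sub]
  ring

end CrossEntropy

theorem stmt5_general {p : ℕ} {ι : Type*}
    (Sig Sval : Matrix (Fin p) (Fin p) ℝ)
    (Shat : ι → Matrix (Fin p) (Fin p) ℝ) (hPD : ∀ G, (Shat G).PosDef)
    (Gstar GCV : ι)
    (hGstar : ∀ G, CE Sig (Shat Gstar) ≤ CE Sig (Shat G))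
    (hGCV : ∀ G, CE Sval (Shat GCV) ≤ CE Sval (Shat G)) :
    0 ≤ CE Sig (Shat GCV) - CE Sig (Shat Gstar) ∧
    CE Sig (Shat GCV) - CE Sig (Shat Gstar) ≤
      (1/2) * minner (Sig - Sval) ((Shat GCV)⁻¹ - (Shat Gstar)⁻¹) := by
  have hshift : ∀ G,
      CE Sig (Shat G) = CE Sval (Shat G) + (1/2) * minner (Sig - Sval) (Shat G)⁻¹ := fun G ↦
    CE_eq_CE_add_minner Sig Sval (isHermitian_iff_isSymm.mp (hPD G).isHermitian)
  refine ⟨sub_nonneg.mpr (hGstar GCV), ?_⟩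
  rw [minner_sub_right]
  linarith [hshift GCV, hshift Gstar, hGCV Gstar]

/-- Basic regret control: if Ĝ* minimises the true CE and Ĝ_CV the validated CE
    over a finite family, then
    0 ≤ H(Σ,Σ̂_{Ĝ_CV}) − H(Σ,Σ̂_{Ĝ*}) ≤ (1/2)⟨Σ − S_val, K̂_{Ĝ_CV} − K̂_{Ĝ*}⟩. -/
theorem stmt5 {p : ℕ} {ι : Type*} [Fintype ι] [Nonempty ι]
    (Sig Sval : Matrix (Fin p) (Fin p) ℝ) (hSig : Sig.PosDef) (hSval : Sval.PosDef)
    (Shat : ι → Matrix (Fin p) (Fin p) ℝ) (hPD : ∀ G, (Shat G).PosDef)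
    (Gstar GCV : ι)
    (hGstar : ∀ G, CE Sig (Shat Gstar) ≤ CE Sig (Shat G))
    (hGCV : ∀ G, CE Sval (Shat GCV) ≤ CE Sval (Shat G)) :
    0 ≤ CE Sig (Shat GCV) - CE Sig (Shat Gstar) ∧
    CE Sig (Shat GCV) - CE Sig (Shat Gstar) ≤
      (1/2) * minner (Sig - Sval) ((Shat GCV)⁻¹ - (Shat Gstar)⁻¹) :=
  stmt5_general Sig Sval Shat hPD Gstar GCV hGstar hGCV
end

section
/- Let P := ℙ(|H(Σ,Σ̂_{Ĝ_CV}) − H(Σ,Σ̂_{Ĝ*})| ≤ δ) and W := Σ^{-1/2} S_val Σ^{-1/2}. Then P ≥ ℙ(‖W − I_p‖_F ≤ δ / max_{G∈M} ‖Σ^{1/2} K̂_G Σ^{1/2}‖_F). -/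
open MeasureTheory Matrix Real ProbabilityTheory

/-- The square root of a positive semidefinite matrix, as `Matrix.PosSemidef.sqrt` was defined in
Mathlib (Dec 2024); that definition has since been removed. -/
noncomputable def Matrix.PosSemidef.sqrt {n : Type*} [Fintype n] [DecidableEq n]
    {A : Matrix n n ℝ} (hA : A.PosSemidef) : Matrix n n ℝ :=
  hA.1.eigenvectorUnitary.1 * diagonal ((↑) ∘ (√·) ∘ hA.1.eigenvalues) *
    (star hA.1.eigenvectorUnitary : Matrix n n ℝ)

instance matMeasurableSpace {p : ℕ} : MeasurableSpace (Matrix (Fin p) (Fin p) ℝ) :=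
  (inferInstance : MeasurableSpace (Fin p → Fin p → ℝ))

/-! Since `H(Σ, B) - H(S_val, B) = ½ tr((Σ - S_val) B⁻¹)` and
`S_val - Σ = Σ^{1/2} (W - I) Σ^{1/2}`, Cauchy–Schwarz for the trace inner product bounds this
difference by `½ ‖W - I‖_F · max_G ‖Σ^{1/2} K̂_G Σ^{1/2}‖_F`, hence by `δ / 2` uniformly over the
family on the event in question. A minimiser of a criterion that is uniformly `δ / 2`-close to the
true one has regret at most `δ`. -/

lemma Matrix.PosSemidef.sqrt_mul_self {n : Type*} [Fintype n] [DecidableEq n]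
    {A : Matrix n n ℝ} (hA : A.PosSemidef) : hA.sqrt * hA.sqrt = A := by
  unfold Matrix.PosSemidef.sqrt
  have hU : (star hA.1.eigenvectorUnitary : Matrix n n ℝ) * hA.1.eigenvectorUnitary.1 = 1 :=
    Unitary.coe_star_mul_self _
  conv_rhs => rw [hA.1.spectral_theorem, Unitary.conjStarAlgAut_apply]
  rw [show ∀ a b c d e f : Matrix n n ℝ, a * b * c * (d * e * f) = a * (b * (c * d) * e) * f from
    fun a b c d e f => by simp only [Matrix.mul_assoc], hU, Matrix.mul_one, diagonal_mul_diagonal]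
  congr 3
  funext i
  simp [Real.mul_self_sqrt (hA.eigenvalues_nonneg i)]

lemma Matrix.PosDef.isUnit_det_sqrt {n : Type*} [Fintype n] [DecidableEq n]
    {A : Matrix n n ℝ} (hA : A.PosDef) : IsUnit hA.posSemidef.sqrt.det := by
  have hAA : IsUnit (hA.posSemidef.sqrt * hA.posSemidef.sqrt).det := by
    rw [hA.posSemidef.sqrt_mul_self]
    exact hA.det_pos.ne'.isUnit
  rw [det_mul] at hAA
  exact isUnit_of_mul_isUnit_left hAA

lemma frob_nonneg {p : ℕ} (A : Matrix (Fin p) (Fin p) ℝ) : 0 ≤ frob A := Real.sqrt_nonneg _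

lemma abs_trace_mul_le_frob_mul_frob {p : ℕ} (A B : Matrix (Fin p) (Fin p) ℝ) :
    |(A * B).trace| ≤ frob A * frob B := by
  have htrace : (A * B).trace = ∑ x : Fin p × Fin p, A x.1 x.2 * B x.2 x.1 := by
    rw [Fintype.sum_prod_type]
    simp [Matrix.trace, Matrix.mul_apply]
  have hA : ∑ x : Fin p × Fin p, A x.1 x.2 ^ 2 = ∑ i, ∑ j, A i j ^ 2 := Fintype.sum_prod_type _
  have hB : ∑ x : Fin p × Fin p, B x.2 x.1 ^ 2 = ∑ i, ∑ j, B i j ^ 2 := by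
    rw [Fintype.sum_prod_type]
    exact Finset.sum_comm
  rw [frob, frob, ← Real.sqrt_mul (by positivity)]
  apply Real.abs_le_sqrt
  rw [htrace, ← hA, ← hB]
  exact Finset.sum_mul_sq_le_sq_mul_sq _ _ _

lemma CE_sub_CE {p : ℕ} (A A' B : Matrix (Fin p) (Fin p) ℝ) :
    CE A B - CE A' B = ((A - A') * B⁻¹).trace / 2 := by
  rw [CE, CE, Matrix.sub_mul, Matrix.trace_sub]
  ring

lemma abs_trace_sub_mul_le {p : ℕ} {R : Matrix (Fin p) (Fin p) ℝ} (hR : IsUnit R.det)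
    (V K : Matrix (Fin p) (Fin p) ℝ) :
    |((R * R - V) * K).trace| ≤ frob (R⁻¹ * V * R⁻¹ - 1) * frob (R * K * R) := by
  have hconj : V - R * R = R * (R⁻¹ * V * R⁻¹ - 1) * R := by
    rw [Matrix.mul_sub, Matrix.sub_mul, Matrix.mul_one,
      show R * (R⁻¹ * V * R⁻¹) * R = R * R⁻¹ * V * (R⁻¹ * R) by simp only [Matrix.mul_assoc],
      mul_nonsing_inv _ hR, nonsing_inv_mul _ hR, Matrix.one_mul, Matrix.mul_one]
  have htrace : ((V - R * R) * K).trace = ((R⁻¹ * V * R⁻¹ - 1) * (R * K * R)).trace := by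
    rw [hconj, show ∀ X : Matrix (Fin p) (Fin p) ℝ, R * X * R * K = R * (X * (R * K)) by
      simp only [Matrix.mul_assoc, implies_true], Matrix.trace_mul_comm]
    simp only [Matrix.mul_assoc]
  rw [← abs_neg, ← trace_neg, ← Matrix.neg_mul, neg_sub, htrace]
  exact abs_trace_mul_le_frob_mul_frob _ _

lemma sub_le_two_mul_of_abs_sub_le {ι : Type*} {f g : ι → ℝ} {ε : ℝ} {a b : ι}
    (hab : g a ≤ g b) (hfg : ∀ i, |f i - g i| ≤ ε) : f a - f b ≤ 2 * ε := by
  linarith [(abs_le.1 (hfg a)).2, (abs_le.1 (hfg b)).1]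

theorem stmt13_general {p : ℕ} {ι : Type*} [Fintype ι]
    {Ω : Type*} [MeasureSpace Ω]
    (Sig : Matrix (Fin p) (Fin p) ℝ) (hSig : Sig.PosDef) (δ : ℝ) (hδ : 0 < δ)
    (Sval Sexpl : Ω → Matrix (Fin p) (Fin p) ℝ)
    (Shat : ι → Matrix (Fin p) (Fin p) ℝ → Matrix (Fin p) (Fin p) ℝ)
    (Gstar : Matrix (Fin p) (Fin p) ℝ → ι)
    (hGstar : ∀ s G, CE Sig (Shat (Gstar s) s) ≤ CE Sig (Shat G s))
    (GCV : Ω → ι)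
    (hGCV : ∀ ω G, CE (Sval ω) (Shat (GCV ω) (Sexpl ω)) ≤ CE (Sval ω) (Shat G (Sexpl ω))) :
    ℙ {ω | |CE Sig (Shat (GCV ω) (Sexpl ω))
            - CE Sig (Shat (Gstar (Sexpl ω)) (Sexpl ω))| ≤ δ} ≥
    ℙ {ω | frob ((hSig.posSemidef.sqrt)⁻¹ * Sval ω * (hSig.posSemidef.sqrt)⁻¹ - 1) ≤
        δ / ⨆ G : ι, frob (hSig.posSemidef.sqrt * (Shat G (Sexpl ω))⁻¹
            * hSig.posSemidef.sqrt)} := by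
  refine measure_mono fun ω hω => ?_
  set R := hSig.posSemidef.sqrt
  set dev := frob (R⁻¹ * Sval ω * R⁻¹ - 1)
  set m := fun G => frob (R * (Shat G (Sexpl ω))⁻¹ * R)
  have hm : ∀ G, m G ≤ ⨆ G, m G := le_ciSup (Set.finite_range m).bddAbove
  have hdev : ∀ G, |CE Sig (Shat G (Sexpl ω)) - CE (Sval ω) (Shat G (Sexpl ω))|
      ≤ dev * (⨆ G, m G) / 2 := fun G => by
    rw [CE_sub_CE, ← hSig.posSemidef.sqrt_mul_self, abs_div, abs_two]
    gcongr
    exact (abs_trace_sub_mul_le hSig.isUnit_det_sqrt _ _).trans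
      (mul_le_mul_of_nonneg_left (hm G) (frob_nonneg _))
  show |_| ≤ δ
  rw [abs_of_nonneg (sub_nonneg.2 (hGstar _ _))]
  calc _ ≤ 2 * (dev * (⨆ G, m G) / 2) := sub_le_two_mul_of_abs_sub_le
        (f := fun G => CE Sig (Shat G (Sexpl ω))) (hGCV ω _) hdev
    _ = dev * ⨆ G, m G := by ring
    _ ≤ δ := mul_le_of_le_div₀ hδ.le (Real.iSup_nonneg fun G => frob_nonneg _) hω

/-- Concentration bound: P(|regret| ≤ δ) ≥ P(‖W − I‖_F ≤ δ / max_G ‖Σ^{1/2}K̂_GΣ^{1/2}‖_F)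
    where W = Σ^{-1/2} S_val Σ^{-1/2}. -/
theorem stmt13 {p : ℕ} {ι : Type*} [Fintype ι] [Nonempty ι]
    {Ω : Type*} [MeasureSpace Ω] [IsProbabilityMeasure (ℙ : Measure Ω)]
    (Sig : Matrix (Fin p) (Fin p) ℝ) (hSig : Sig.PosDef) (δ : ℝ) (hδ : 0 < δ)
    (Sval Sexpl : Ω → Matrix (Fin p) (Fin p) ℝ)
    (hmSval : Measurable Sval) (hmSexpl : Measurable Sexpl)
    (Shat : ι → Matrix (Fin p) (Fin p) ℝ → Matrix (Fin p) (Fin p) ℝ)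
    (hPD : ∀ G s, (Shat G s).PosDef)
    (Gstar : Matrix (Fin p) (Fin p) ℝ → ι)
    (hGstar : ∀ s G, CE Sig (Shat (Gstar s) s) ≤ CE Sig (Shat G s))
    (GCV : Ω → ι)
    (hGCV : ∀ ω G, CE (Sval ω) (Shat (GCV ω) (Sexpl ω)) ≤ CE (Sval ω) (Shat G (Sexpl ω))) :
    ℙ {ω | |CE Sig (Shat (GCV ω) (Sexpl ω))
            - CE Sig (Shat (Gstar (Sexpl ω)) (Sexpl ω))| ≤ δ} ≥
    ℙ {ω | frob ((hSig.posSemidef.sqrt)⁻¹ * Sval ω * (hSig.posSemidef.sqrt)⁻¹ - 1) ≤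
        δ / ⨆ G : ι, frob (hSig.posSemidef.sqrt * (Shat G (Sexpl ω))⁻¹
            * hSig.posSemidef.sqrt)} :=
  stmt13_general Sig hSig δ hδ Sval Sexpl Shat Gstar hGstar GCV hGCV
end
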